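/- Let $\Phi_t$ be the fundamental matrix of $\dot\Phi = A_t\Phi$, $P \geq 0$ symmetric, and $\bar C_t := \int_0^t \Phi_s^T C_s^T R_s^{-1} C_s \Phi_s\,ds$. Suppose $u \in \mathbb{R}^m$ satisfies $\|\Phi_t^T u\| \to 0$ as $t \to \infty$ and suppose $\bar C_t \geq c\,I$ for all $t \geq T_0$ for some constants $c > 0, T_0 \geq 0$. Then $u^T P_t u \to 0$ as $t \to \infty$, where $P_t = \Phi_t \sqrt{P}(I + \sqrt P\,\bar C_t\,\sqrt P)^{-1}\sqrt P\,\Phi_t^T$ is the solution of the noise-free Riccati equation. -/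

import Mathlib

set_option maxHeartbeats 1000000


open Matrix Filter intervalIntegral
open scoped Matrix.Norms.L2Operator

open scoped ComplexOrder in
/-- The positive semidefinite square root of a positive semidefinite matrix
(the definition `Matrix.PosSemidef.sqrt` of the older Mathlib, since removed). -/
noncomputable def Matrix.PosSemidef.sqrt {n : Type*} [Fintype n] [DecidableEq n]
    {𝕜 : Type*} [RCLike 𝕜] {A : Matrix n n 𝕜} (hA : Matrix.PosSemidef A) : Matrix n n 𝕜 :=
  hA.1.eigenvectorUnitary.1 * diagonal ((↑) ∘ (√·) ∘ hA.1.eigenvalues) *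
  (star hA.1.eigenvectorUnitary : Matrix n n 𝕜)

private lemma quad_form_eq {m : ℕ} (B N : Matrix (Fin m) (Fin m) ℝ) (u : Fin m → ℝ) :
    u ⬝ᵥ ((Bᵀ * N * B) *ᵥ u) = (B *ᵥ u) ⬝ᵥ (N *ᵥ (B *ᵥ u)) := by
  rw [← Matrix.mulVec_mulVec, ← Matrix.mulVec_mulVec, Matrix.dotProduct_mulVec,
    Matrix.vecMul_transpose]

/-- Collapse of the noise-free filter covariance along the stable
subspace of the dynamics: if `‖Φ_tᵀ u‖ → 0` and the observability integral `C̄_t` is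
bounded below by `c I` for large `t`, then `uᵀ P_t u → 0`, where
`P_t = Φ_t √P (I + √P C̄_t √P)⁻¹ √P Φ_tᵀ`. -/
theorem covariance_collapse_on_stable_subspace
    {m n : ℕ}
    (A : ℝ → Matrix (Fin m) (Fin m) ℝ)
    (C : ℝ → Matrix (Fin n) (Fin m) ℝ)
    (R : ℝ → Matrix (Fin n) (Fin n) ℝ)
    (hA : Continuous A) (hC : Continuous C) (hR : Continuous R)
    (hRpd : ∀ t, (R t).PosDef)
    (Φ : ℝ → Matrix (Fin m) (Fin m) ℝ)
    (hΦ : ∀ t, HasDerivAt Φ (A t * Φ t) t) (hΦ0 : Φ 0 = 1)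
    (P : Matrix (Fin m) (Fin m) ℝ) (hP : P.PosSemidef)
    (Cbar : ℝ → Matrix (Fin m) (Fin m) ℝ)
    (hCbar : ∀ t, Cbar t = ∫ s in (0:ℝ)..t, (Φ s)ᵀ * (C s)ᵀ * (R s)⁻¹ * C s * Φ s)
    (Pt : ℝ → Matrix (Fin m) (Fin m) ℝ)
    (hPt : ∀ t, Pt t = Φ t * hP.sqrt * (1 + hP.sqrt * Cbar t * hP.sqrt)⁻¹ * hP.sqrt * (Φ t)ᵀ)
    (u : Fin m → ℝ)
    (hu : Tendsto (fun t => ‖(Φ t)ᵀ *ᵥ u‖) atTop (nhds 0))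
    (c T₀ : ℝ) (hc : 0 < c) (hT₀ : 0 ≤ T₀)
    (hCbarLB : ∀ t ≥ T₀, (Cbar t - c • (1 : Matrix (Fin m) (Fin m) ℝ)).PosSemidef) :
    Tendsto (fun t => u ⬝ᵥ (Pt t *ᵥ u)) atTop (nhds 0) := by
  set Q := hP.sqrt with hQdef
  have hQ : Q.PosSemidef := by
    rw [hQdef, Matrix.PosSemidef.sqrt]
    exact (Matrix.posSemidef_diagonal_iff.mpr fun i => by
      simp [Real.sqrt_nonneg]).mul_mul_conjTranspose_same _
  have hQT : Qᵀ = Q := hQ.1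
  -- the vector `v t = Q Φ_tᵀ u`
  set v : ℝ → Fin m → ℝ := fun t => Q *ᵥ ((Φ t)ᵀ *ᵥ u) with hvdef
  -- the comparison function tends to 0
  have h1 : Tendsto (fun t => (Φ t)ᵀ *ᵥ u) atTop (nhds 0) := by
    rwa [← tendsto_zero_iff_norm_tendsto_zero] at hu
  have hcont : Continuous fun x : Fin m → ℝ => (Q *ᵥ x) ⬝ᵥ (Q *ᵥ x) :=
    Continuous.dotProduct (continuous_const.matrix_mulVec continuous_id)
      (continuous_const.matrix_mulVec continuous_id)
  have h2 : Tendsto (fun t => v t ⬝ᵥ v t) atTop (nhds 0) := by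
    have h3 := (hcont.tendsto 0).comp h1
    have h0 : (Q *ᵥ (0 : Fin m → ℝ)) ⬝ᵥ (Q *ᵥ (0 : Fin m → ℝ)) = 0 := by
      rw [Matrix.mulVec_zero, dotProduct_zero]
    rw [h0] at h3
    exact h3
  -- the sandwich bounds, eventually in `t`
  have key : ∀ t ≥ T₀, 0 ≤ u ⬝ᵥ (Pt t *ᵥ u) ∧ u ⬝ᵥ (Pt t *ᵥ u) ≤ v t ⬝ᵥ v t := by
    intro t ht
    set M : Matrix (Fin m) (Fin m) ℝ := 1 + Q * Cbar t * Q with hMdef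
    have hCb : (Cbar t).PosSemidef := by
      have h₁ := hCbarLB t ht
      have h₂ : (c • (1 : Matrix (Fin m) (Fin m) ℝ)).PosSemidef := by
        have : c • (1 : Matrix (Fin m) (Fin m) ℝ) = Matrix.diagonal (fun _ => c) := by
          ext i j
          by_cases h : i = j <;> simp [Matrix.one_apply, Matrix.diagonal, h]
        rw [this]
        exact Matrix.posSemidef_diagonal_iff.mpr fun _ => hc.le
      simpa using h₁.add h₂
    have hQCQ : (Q * Cbar t * Q).PosSemidef := by
      have := hCb.mul_mul_conjTranspose_same Q
      rwa [show Qᴴ = Q from hQ.1] at this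
    have hM : M.PosDef := Matrix.PosDef.one.add_posSemidef hQCQ
    have hMN : M * M⁻¹ = 1 := Matrix.mul_nonsing_inv M (isUnit_iff_isUnit_det M |>.mp hM.isUnit)
    set w : Fin m → ℝ := M⁻¹ *ᵥ v t with hwdef
    have hvw : M *ᵥ w = v t := by
      rw [hwdef, Matrix.mulVec_mulVec, hMN, Matrix.one_mulVec]
    -- rewrite the quadratic form
    have hquad : u ⬝ᵥ (Pt t *ᵥ u) = v t ⬝ᵥ w := by
      have hB : Pt t = (Q * (Φ t)ᵀ)ᵀ * M⁻¹ * (Q * (Φ t)ᵀ) := by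
        rw [hPt t, ← hMdef, Matrix.transpose_mul, Matrix.transpose_transpose, hQT]
        simp only [Matrix.mul_assoc]
      have hBv : (Q * (Φ t)ᵀ) *ᵥ u = v t := by rw [← Matrix.mulVec_mulVec]
      rw [hB, quad_form_eq, hBv, hwdef]
    have hMinv : M⁻¹.PosSemidef := hM.inv.posSemidef
    have hnn : 0 ≤ v t ⬝ᵥ w := by
      have := hMinv.dotProduct_mulVec_nonneg (v t)
      simpa [hwdef] using this
    constructor
    · rw [hquad]; exact hnn
    · rw [hquad]
      -- `‖w‖² ≤ v ⬝ w`
      have hww_le : w ⬝ᵥ w ≤ v t ⬝ᵥ w := by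
        have hMw : v t ⬝ᵥ w = w ⬝ᵥ w + ((Q * Cbar t * Q) *ᵥ w) ⬝ᵥ w := by
          rw [← hvw, hMdef, Matrix.add_mulVec, Matrix.one_mulVec, add_dotProduct]
        have hpos : 0 ≤ ((Q * Cbar t * Q) *ᵥ w) ⬝ᵥ w := by
          have := hQCQ.dotProduct_mulVec_nonneg w
          simpa [dotProduct_comm] using this
        linarith
      have hww : 0 ≤ w ⬝ᵥ w := by simpa using dotProduct_star_self_nonneg w
      have hvv : 0 ≤ v t ⬝ᵥ v t := by simpa using dotProduct_star_self_nonneg (v t)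
      -- Cauchy–Schwarz
      have hCS : (v t ⬝ᵥ w) ^ 2 ≤ (v t ⬝ᵥ v t) * (w ⬝ᵥ w) := by
        have key := Finset.sum_mul_sq_le_sq_mul_sq Finset.univ (v t) w
        simpa only [dotProduct, pow_two] using key
      generalize hag : v t ⬝ᵥ w = a at *
      generalize hbg : w ⬝ᵥ w = b at *
      generalize hVg : v t ⬝ᵥ v t = V at *
      nlinarith [hCS, hww_le, hnn, hvv, hww]
  exact tendsto_of_tendsto_of_tendsto_of_le_of_le' tendsto_const_nhds h2
    (Filter.eventually_atTop.mpr ⟨T₀, fun t ht => (key t ht).1⟩)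
    (Filter.eventually_atTop.mpr ⟨T₀, fun t ht => (key t ht).2⟩)
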